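/- For every t ∈ ℂ with t ∉ {0, μ³, 1/μ}, the derivative of the composition ψ∘λ at t equals (ψ∘λ)′(t) = −(1−μ⁴)²·(t − μ²/t)/(μ·t·(1−μt)²·(1−μ³/t)²). -/

import Mathlib

open Complex Set Filter MeasureTheory

/-- `μ = (R - √(R²-4))/2`. -/
noncomputable def mu (R : ℝ) : ℝ := (R - Real.sqrt (R ^ 2 - 4)) / 2

/-- The Möbius transformation `λ(z) = (z - μ)/(μz - 1)`. -/
noncomputable def lam (R : ℝ) (z : ℂ) : ℂ := (z - (mu R : ℂ)) / ((mu R : ℂ) * z - 1)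

/-- The shifted Zhukovsky-type map `ψ(w) = Rw - 1 + 1/(Rw - 1)`. -/
noncomputable def psi (R : ℝ) (w : ℂ) : ℂ := (R : ℂ) * w - 1 + ((R : ℂ) * w - 1)⁻¹

/-- `χ(t) = t ∑_{k ∈ ℤ} μ^{4k} exp((μ - 1/μ) μ^{4k} t)`. -/
noncomputable def chi (R : ℝ) (t : ℂ) : ℂ :=
  t * ∑' k : ℤ, (mu R : ℂ) ^ (4 * k) *
    Complex.exp (((mu R : ℂ) - (mu R : ℂ)⁻¹) * (mu R : ℂ) ^ (4 * k) * t)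

/-- The region `D = {t : |t - 1/R| < 1/R, Re t > Rμ²/2}`. -/
def Dset (R : ℝ) : Set ℂ :=
  {t | ‖t - 1 / (R : ℂ)‖ < 1 / R ∧ R * (mu R) ^ 2 / 2 < t.re}

/-- The region `𝔇 = {w : |w - R/(R²-1)| > 1/(R²-1), |w| < 1}`. -/
def frakD (R : ℝ) : Set ℂ :=
  {w | 1 / (R ^ 2 - 1) < ‖w - (R : ℂ) / (((R : ℝ) ^ 2 - 1 : ℝ) : ℂ)‖ ∧
    ‖w‖ < 1}

/-- The orthogonality domain `G₁ = ψ(𝔇)`. -/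
noncomputable def G1 (R : ℝ) : Set ℂ := psi R '' frakD R

/-- `p` is the sequence of Carleman (Bergman) orthonormal polynomials of `G₁`:
`p n` has degree `n`, real positive leading coefficient, and
`(1/π) ∫_{G₁} pₙ conj(pₘ) dA = δ_{n,m}`. -/
def IsCarleman (R : ℝ) (p : ℕ → Polynomial ℂ) : Prop :=
  (∀ n, (p n).natDegree = n) ∧
  (∀ n, 0 < (p n).leadingCoeff.re ∧ (p n).leadingCoeff.im = 0) ∧
  (∀ n m, ∫ z in G1 R, (p n).eval z * (starRingEnd ℂ) ((p m).eval z) =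
      if n = m then (Real.pi : ℂ) else 0)

/-- The limit functions `f_q` of Theorem 1.1. -/
noncomputable def fq (R q : ℝ) (t : ℂ) : ℂ :=
  (1 - (mu R : ℂ) * t) ^ 2 * (1 - (mu R : ℂ) ^ 3 / t) ^ 2 / ((1 - (mu R : ℂ) ^ 4) * R) *
    ((chi R ((((mu R) ^ (4 * q) : ℝ) : ℂ) * t) -
        chi R ((((mu R) ^ (4 * q + 2) : ℝ) : ℂ) / t)) /
      (t - (mu R : ℂ) ^ 2 / t))

/-- `Gₙ(t) = μ^{-n} λ(t)ⁿ λ'(t)`. -/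
noncomputable def Gfun (R : ℝ) (n : ℕ) (t : ℂ) : ℂ :=
  ((mu R : ℂ) ^ n)⁻¹ * (lam R t) ^ n * deriv (lam R) t

/-!
Chain rule. Since `μ + 1/μ = R`, one has `Rλ(t) - 1 = (t - μ³)/(μ(μt - 1))`, so
`ψ'(λ(t)) = R(1 - μ²(μt - 1)²/(t - μ³)²)`, while `λ'(t) = (μ² - 1)/(μt - 1)²`. The product
factors through `(t - μ³)² - μ²(μt - 1)² = (1 - μ²)(t + μ)·(1 + μ²)(t - μ)`.
-/

theorem mu_pos {R : ℝ} (hR : 0 < R) : 0 < mu R := by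
  have : Real.sqrt (R ^ 2 - 4) < R :=
    (Real.sqrt_lt' hR).mpr (by linarith)
  unfold mu
  linarith

theorem mu_sq_sub_mul_add_one {R : ℝ} (hR : 4 ≤ R ^ 2) : mu R ^ 2 - R * mu R + 1 = 0 := by
  have := Real.sq_sqrt (sub_nonneg.mpr hR)
  unfold mu
  linear_combination this / 4

theorem ofReal_eq_mu_add_inv {R : ℝ} (hR : 2 ≤ R) : (R : ℂ) = mu R + (mu R : ℂ)⁻¹ := by
  have hμ : (mu R : ℂ) ≠ 0 := by exact_mod_cast (mu_pos (by linarith)).ne'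
  have hquad : (mu R : ℂ) ^ 2 - R * mu R + 1 = 0 := by
    exact_mod_cast mu_sq_sub_mul_add_one (R := R) (by nlinarith)
  field_simp
  linear_combination -hquad

theorem hasDerivAt_lam (R : ℝ) {t : ℂ} (ht : (mu R : ℂ) * t - 1 ≠ 0) :
    HasDerivAt (lam R) (((mu R : ℂ) ^ 2 - 1) / ((mu R : ℂ) * t - 1) ^ 2) t := by
  have hnum : HasDerivAt (fun s : ℂ => s - mu R) 1 t := (hasDerivAt_id t).sub_const _
  have hden : HasDerivAt (fun s : ℂ => mu R * s - 1) (mu R) t := by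
    simpa using ((hasDerivAt_id t).const_mul (mu R : ℂ)).sub_const 1
  have h := hnum.div hden ht
  rwa [show 1 * ((mu R : ℂ) * t - 1) - (t - mu R) * mu R = (mu R : ℂ) ^ 2 - 1 by ring] at h

theorem hasDerivAt_psi (R : ℝ) {w : ℂ} (hw : (R : ℂ) * w - 1 ≠ 0) :
    HasDerivAt (psi R) (R - R / ((R : ℂ) * w - 1) ^ 2) w := by
  have hlin : HasDerivAt (fun v : ℂ => R * v - 1) R w := by
    simpa using ((hasDerivAt_id w).const_mul (R : ℂ)).sub_const 1
  rw [sub_eq_add_neg, ← neg_div]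
  exact hlin.add (hlin.inv hw)

theorem mul_lam_sub_one {R : ℝ} (hR : 2 ≤ R) {t : ℂ} (ht : (mu R : ℂ) * t - 1 ≠ 0) :
    (R : ℂ) * lam R t - 1 = (t - (mu R : ℂ) ^ 3) / (mu R * ((mu R : ℂ) * t - 1)) := by
  have hμ : (mu R : ℂ) ≠ 0 := by exact_mod_cast (mu_pos (by linarith)).ne'
  rw [lam, ofReal_eq_mu_add_inv hR]
  field_simp
  ring

/-- `(ψ∘λ)'(t) = -(1-μ⁴)²(t - μ²/t)/(μ t (1-μt)² (1-μ³/t)²)`. -/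
theorem stmt_9 (R : ℝ) (hR : 2 < R) :
    ∀ t : ℂ, t ≠ 0 → t ≠ (mu R : ℂ) ^ 3 → t ≠ ((mu R : ℂ))⁻¹ →
      deriv (fun s => psi R (lam R s)) t =
        -((1 - (mu R : ℂ) ^ 4) ^ 2 * (t - (mu R : ℂ) ^ 2 / t)) /
          ((mu R : ℂ) * t * (1 - (mu R : ℂ) * t) ^ 2 * (1 - (mu R : ℂ) ^ 3 / t) ^ 2) := by
  intro t ht0 ht3 htinv
  have hμ : (mu R : ℂ) ≠ 0 := by exact_mod_cast (mu_pos (by linarith)).ne'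
  have hden : (mu R : ℂ) * t - 1 ≠ 0 := by
    contrapose! htinv
    exact eq_inv_of_mul_eq_one_right (sub_eq_zero.mp htinv)
  have hw := mul_lam_sub_one hR.le hden
  have ht3' : t - (mu R : ℂ) ^ 3 ≠ 0 := sub_ne_zero.mpr ht3
  have hw0 : (R : ℂ) * lam R t - 1 ≠ 0 := by
    rw [hw]
    exact div_ne_zero ht3' (mul_ne_zero hμ hden)
  have hden' : 1 - (mu R : ℂ) * t ≠ 0 := by
    rwa [← neg_ne_zero, neg_sub]
  have hcomp : HasDerivAt (fun s => psi R (lam R s)) _ t :=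
    (hasDerivAt_psi R hw0).comp t (hasDerivAt_lam R hden)
  rw [hcomp.deriv, hw, ofReal_eq_mu_add_inv hR.le]
  field_simp
  ring
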